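/- Let P₁ be the set of (x,Y) ∈ ℝ^m × ℝ^{m×m} satisfying the constraints of the incomplete first-level RLT relaxation (row sums ∑_f y_{ef} = (n−1)x_e, subtour-multiplied constraints ∑_{f∈E(S)} y_{ef} ≤ (|S|−1)x_e for all e and all S ⊊ V with |S| ≥ 2, diagonal y_{ee} = x_e, nonnegativity, x in the spanning tree polytope) augmented by symmetry y_{ef} = y_{fe}. Then every such (x,Y) satisfies 0 ≤ y_{ef} ≤ x_e for all e, f with e ≠ f, but there exist graphs and feasible points (x,Y) ∈ P₁ violating x_e + x_f ≤ 1 + y_{ef}; hence the relaxation obtained by adding all inequalities x_e + x_f ≤ 1 + y_{ef} is strictly contained in P₁ for some instances. -/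

import Mathlib

/-!
The bound `Y e f ≤ x e` is the subtour-multiplied constraint for `e` with `S` the two endpoints
of `f`: since the labelling is injective and loopless, `f` is the only edge inside `S`, and
`|S| - 1 = 1`.
-/

open Finset

/-- Feasible set of the incomplete first-level RLT relaxation augmented with
symmetry: row sums, subtour-multiplied constraints, diagonal, nonnegativity,
symmetry, and membership of `x` in the spanning tree polytope of the graph with
edge labelling `ends`. -/
def IncompleteRLT1Sym (n m : ℕ) (ends : Fin m → Sym2 (Fin n))
    (x : Fin m → ℝ) (Y : Fin m → Fin m → ℝ) : Prop :=
  (∀ e, ∑ f, Y e f = ((n : ℝ) - 1) * x e) ∧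
  (∀ e : Fin m, ∀ S : Finset (Fin n), 2 ≤ S.card → S ⊂ Finset.univ →
    ∑ f ∈ Finset.univ.filter (fun f => ∀ v ∈ ends f, v ∈ S), Y e f ≤
      ((S.card : ℝ) - 1) * x e) ∧
  (∀ e, Y e e = x e) ∧
  (∀ e f, 0 ≤ Y e f) ∧
  (∀ e f, Y e f = Y f e) ∧
  x ∈ convexHull ℝ {y : Fin m → ℝ | ∃ T : Finset (Fin m),
    (∀ e, y e = if e ∈ T then (1 : ℝ) else 0) ∧
    (SimpleGraph.fromEdgeSet (ends '' (T : Set (Fin m)))).IsTree}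

section Labelling

variable {ι V : Type*} {ends : ι → Sym2 V}

lemma filter_forall_mem_toFinset_eq_singleton [Fintype ι] [DecidableEq V]
    (hinj : Function.Injective ends) (hdiag : ∀ e, ¬ (ends e).IsDiag) (f : ι)
    [DecidablePred fun g => ∀ v ∈ ends g, v ∈ (ends f).toFinset] :
    univ.filter (fun g => ∀ v ∈ ends g, v ∈ (ends f).toFinset) = {f} := by
  ext g
  simp only [mem_filter, mem_univ, true_and, mem_singleton, Sym2.mem_toFinset]
  refine ⟨fun hsub => hinj ?_, fun hgf _ hv => hgf ▸ hv⟩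
  induction hg : ends g using Sym2.ind with
  | _ a b =>
    have hab : a ≠ b := fun h => hdiag g (hg ▸ h ▸ Sym2.mk_isDiag_iff.mpr rfl)
    exact Sym2.eq_of_ne_mem hab (Sym2.mem_mk_left a b) (Sym2.mem_mk_right a b)
      (hsub a (hg ▸ Sym2.mem_mk_left a b)) (hsub b (hg ▸ Sym2.mem_mk_right a b))

lemma isTree_fromEdgeSet_image_iff [Finite V] (hinj : Function.Injective ends)
    (hdiag : ∀ e, ¬ (ends e).IsDiag) (T : Finset ι) :
    (SimpleGraph.fromEdgeSet (ends '' T)).IsTree ↔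
      (SimpleGraph.fromEdgeSet (ends '' T)).Connected ∧ #T + 1 = Nat.card V := by
  have hedges : (SimpleGraph.fromEdgeSet (ends '' T)).edgeSet = ends '' T := by
    rw [SimpleGraph.edgeSet_fromEdgeSet, sdiff_eq_left, Set.disjoint_left]
    rintro _ ⟨e, -, rfl⟩
    exact hdiag e
  rw [SimpleGraph.isTree_iff_connected_and_card, hedges, Nat.card_image_of_injective hinj,
    Nat.card_coe_set_eq, Set.ncard_coe_finset]

end Labelling

theorem IncompleteRLT1Sym.le {n m : ℕ} {ends : Fin m → Sym2 (Fin n)} {x : Fin m → ℝ}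
    {Y : Fin m → Fin m → ℝ} (h : IncompleteRLT1Sym n m ends x Y) (hn : 3 ≤ n)
    (hinj : Function.Injective ends) (hdiag : ∀ e, ¬ (ends e).IsDiag) (e f : Fin m) :
    Y e f ≤ x e := by
  have hcard : #(ends f).toFinset = 2 := Sym2.card_toFinset_of_not_isDiag _ (hdiag f)
  have hproper : (ends f).toFinset ⊂ univ := by
    rw [ssubset_univ_iff, ← card_lt_iff_ne_univ, hcard, Fintype.card_fin]
    omega
  have hsubtour := h.2.1 e (ends f).toFinset hcard.ge hproper
  rw [filter_forall_mem_toFinset_eq_singleton hinj hdiag, sum_singleton, hcard] at hsubtour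
  norm_num at hsubtour
  exact hsubtour

/- On the 4-cycle, `x ≡ 3/4` is the average of the four spanning paths, and `Y` vanishes exactly
on the two pairs of opposite edges, where `x e + x f = 3/2 > 1 + Y e f`. -/
namespace FourCycle

def ends : Fin 4 → Sym2 (Fin 4) := ![s(0, 1), s(1, 2), s(2, 3), s(3, 0)]

noncomputable def x : Fin 4 → ℝ := fun _ => 3 / 4

noncomputable def Y (e f : Fin 4) : ℝ := if f = e + 2 then 0 else 3 / 4

lemma ends_injective : Function.Injective ends := by decide

lemma not_isDiag_ends (e : Fin 4) : ¬ (ends e).IsDiag := by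
  fin_cases e <;> decide

lemma isTree_erase (i : Fin 4) : (SimpleGraph.fromEdgeSet (ends '' ↑(univ.erase i))).IsTree := by
  refine (isTree_fromEdgeSet_image_iff ends_injective not_isDiag_ends _).2 ⟨?_, by simp⟩
  rw [← coe_image]
  fin_cases i <;> decide

lemma card_edges_within_add_one_le (S : Finset (Fin 4)) (hS : 2 ≤ #S) (hproper : S ⊂ univ) :
    #(univ.filter fun f => ∀ v ∈ ends f, v ∈ S) + 1 ≤ #S := by
  revert S; decide

lemma Y_le (e f : Fin 4) : Y e f ≤ 3 / 4 := by
  unfold Y; split_ifs <;> norm_num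

lemma x_mem_spanningTreePolytope :
    x ∈ convexHull ℝ {y : Fin 4 → ℝ | ∃ T : Finset (Fin 4),
      (∀ e, y e = if e ∈ T then (1 : ℝ) else 0) ∧
      (SimpleGraph.fromEdgeSet (ends '' (T : Set (Fin 4)))).IsTree} := by
  have hx : x = ∑ i : Fin 4, (1 / 4 : ℝ) • fun e => if e ∈ univ.erase i then (1 : ℝ) else 0 := by
    funext e
    fin_cases e <;> simp [x, Fin.sum_univ_four] <;> norm_num
  rw [hx]
  exact (convex_convexHull ℝ _).sum_mem (fun _ _ => by norm_num) (by simp)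
    fun i _ => subset_convexHull ℝ _ ⟨univ.erase i, fun _ => rfl, isTree_erase i⟩

theorem feasible : IncompleteRLT1Sym 4 4 ends x Y := by
  refine ⟨?_, ?_, ?_, ?_, ?_, x_mem_spanningTreePolytope⟩
  · intro e; fin_cases e <;> simp [Fin.sum_univ_four, Y, x] <;> norm_num
  · intro e S hS hproper
    have hcard : (#(univ.filter fun f => ∀ v ∈ ends f, v ∈ S) : ℝ) + 1 ≤ #S := by
      exact_mod_cast card_edges_within_add_one_le S hS hproper
    calc ∑ f ∈ univ.filter (fun f => ∀ v ∈ ends f, v ∈ S), Y e f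
        ≤ #(univ.filter fun f => ∀ v ∈ ends f, v ∈ S) * (3 / 4 : ℝ) := by
          simpa using sum_le_sum fun f _ => Y_le e f
      _ ≤ (#S - 1) * x e := by rw [x]; linarith
  · intro e; fin_cases e <;> simp [Y, x]
  · intro e f; unfold Y; split_ifs <;> norm_num
  · intro e f; fin_cases e <;> fin_cases f <;> simp [Y]

end FourCycle

/-- Every point of the incomplete first-level RLT relaxation (with
symmetry) satisfies `0 ≤ y e f ≤ x e`, but there is an instance together with a
feasible point violating `x e + x f ≤ 1 + y e f`; hence adding these BQP
inequalities strictly cuts the relaxation on some instances. -/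
theorem incomplete_rlt1_bounds_and_bqp_violation :
    (∀ (n m : ℕ), 3 ≤ n → ∀ ends : Fin m → Sym2 (Fin n),
      Function.Injective ends → (∀ e, ¬ (ends e).IsDiag) →
      ∀ (x : Fin m → ℝ) (Y : Fin m → Fin m → ℝ),
        IncompleteRLT1Sym n m ends x Y →
        ∀ e f : Fin m, e ≠ f → 0 ≤ Y e f ∧ Y e f ≤ x e) ∧
    (∃ (n m : ℕ) (ends : Fin m → Sym2 (Fin n)) (x : Fin m → ℝ)
        (Y : Fin m → Fin m → ℝ) (e f : Fin m),
      3 ≤ n ∧ Function.Injective ends ∧ (∀ e, ¬ (ends e).IsDiag) ∧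
      IncompleteRLT1Sym n m ends x Y ∧ 1 + Y e f < x e + x f) := by
  refine ⟨fun n m hn ends hinj hdiag x Y h e f _ => ⟨h.2.2.2.1 e f, h.le hn hinj hdiag e f⟩,
    ⟨4, 4, FourCycle.ends, FourCycle.x, FourCycle.Y, 0, 2, by norm_num,
      FourCycle.ends_injective, FourCycle.not_isDiag_ends, FourCycle.feasible, ?_⟩⟩
  norm_num [FourCycle.x, FourCycle.Y]
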